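/- arXiv:1102.3020 — 2 statements merged into one kernel-verified Lean document; each statement's English description precedes it below -/
import Mathlib

section
/- Let (Ω, ℱ, P) be a probability space equipped with a filtration (ℱ_n)_{n∈ℕ}, let D be an event measurable with respect to the σ-algebra ⨆_n ℱ_n generated by the union of the ℱ_n, and let L : [0,∞) → ℝ be a nonincreasing function with 0 < L(t) ≤ 1 for all t ≥ 0. For each n let X_n : Ω → ℕ and Y_n : Ω → [0,∞) be ℱ_n-measurable random variables such that L(Y_n)^{X_n} ≤ P(D | ℱ_n) holds almost surely. Then X_n + Y_n → ∞ almost surely on the complement of D. -/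
open MeasureTheory Filter

/-! By Lévy's upward theorem `P(D | ℱ n) → 1_D` almost surely, so off `D` the lower bounds
`L(Y n) ^ X n` tend to `0`. If `X n + Y n ≤ c` held along a subsequence, each term would stay
above `L c ^ ⌈c⌉₊ > 0`, since `L` is nonincreasing with values in `(0, 1]`. -/

theorem ae_tendsto_condExp_indicator_zero_of_notMem {Ω : Type*} {m : MeasurableSpace Ω}
    {μ : Measure Ω} [IsFiniteMeasure μ] (ℱ : Filtration ℕ m) {D : Set Ω}
    (hD : MeasurableSet[⨆ n, ℱ n] D) :
    ∀ᵐ ω ∂μ, ω ∉ D →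
      Tendsto (fun n => μ[D.indicator (fun _ => (1 : ℝ)) | ℱ n] ω) atTop (nhds 0) := by
  have hle : (⨆ n, ℱ n) ≤ m := iSup_le ℱ.le
  have hcond : μ[D.indicator (fun _ => (1 : ℝ)) | ⨆ n, ℱ n] = D.indicator fun _ => 1 :=
    condExp_of_stronglyMeasurable hle (stronglyMeasurable_const.indicator hD)
      ((integrable_const 1).indicator (hle _ hD))
  filter_upwards [hcond ▸ tendsto_ae_condExp (ℱ := ℱ) (μ := μ) (D.indicator fun _ => 1)]
    with ω hω hωD
  rwa [Set.indicator_of_notMem hωD] at hω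

theorem pow_ceil_le_pow_of_add_le {L : ℝ → ℝ} (hL : AntitoneOn L (Set.Ici 0))
    (hL0 : ∀ t, 0 ≤ t → 0 < L t) (hL1 : ∀ t, 0 ≤ t → L t ≤ 1) {x : ℕ} {y c : ℝ}
    (hy : 0 ≤ y) (h : x + y ≤ c) :
    L c ^ ⌈c⌉₊ ≤ L y ^ x := by
  have hxc : (x : ℝ) ≤ c := (le_add_of_nonneg_right hy).trans h
  have hyc : y ≤ c := (le_add_of_nonneg_left x.cast_nonneg).trans h
  have hc : 0 ≤ c := hy.trans hyc
  have hx : x ≤ ⌈c⌉₊ := by exact_mod_cast hxc.trans (Nat.le_ceil c)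
  calc L c ^ ⌈c⌉₊ ≤ L c ^ x := pow_le_pow_of_le_one (hL0 c hc).le (hL1 c hc) hx
    _ ≤ L y ^ x := pow_le_pow_left₀ (hL0 c hc).le (hL hy hc hyc) x

theorem tendsto_atTop_add_of_pow_le_of_tendsto_zero {L : ℝ → ℝ}
    (hL : AntitoneOn L (Set.Ici 0)) (hL0 : ∀ t, 0 ≤ t → 0 < L t) (hL1 : ∀ t, 0 ≤ t → L t ≤ 1)
    {x : ℕ → ℕ} {y p : ℕ → ℝ}
    (hy : ∀ n, 0 ≤ y n) (hp : Tendsto p atTop (nhds 0)) (hle : ∀ n, L (y n) ^ x n ≤ p n) :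
    Tendsto (fun n => (x n : ℝ) + y n) atTop atTop := by
  refine tendsto_atTop.2 fun b => ?_
  have hpos : 0 < L (max b 0) ^ ⌈max b 0⌉₊ := pow_pos (hL0 _ (le_max_right b 0)) _
  filter_upwards [hp.eventually_lt_const hpos] with n hn
  by_contra! hlt
  have := pow_ceil_le_pow_of_add_le hL hL0 hL1 (hy n) (hlt.le.trans (le_max_left b 0))
  linarith [hle n]

theorem tendsto_atTop_of_laplace_pow_le_condexp_general
    {Ω : Type*} {m : MeasurableSpace Ω} {μ : Measure Ω} [IsProbabilityMeasure μ]
    (ℱ : Filtration ℕ m) (D : Set Ω) (hD : MeasurableSet[⨆ n, ℱ n] D)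
    (L : ℝ → ℝ) (hL : AntitoneOn L (Set.Ici 0))
    (hL0 : ∀ t, 0 ≤ t → 0 < L t) (hL1 : ∀ t, 0 ≤ t → L t ≤ 1)
    (X : ℕ → Ω → ℕ)
    (Y : ℕ → Ω → ℝ) (hY0 : ∀ n ω, 0 ≤ Y n ω)
    (hle : ∀ n, ∀ᵐ ω ∂μ,
      (L (Y n ω)) ^ (X n ω) ≤ (μ[D.indicator (fun _ => (1 : ℝ)) | ℱ n]) ω) :
    ∀ᵐ ω ∂μ, ω ∈ Dᶜ →
      Tendsto (fun n => (X n ω : ℝ) + Y n ω) atTop atTop := by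
  filter_upwards [ae_tendsto_condExp_indicator_zero_of_notMem ℱ hD, ae_all_iff.2 hle]
    with ω hlevy hleω hωD
  exact tendsto_atTop_add_of_pow_le_of_tendsto_zero hL hL0 hL1 (fun n => hY0 n ω)
    (hlevy hωD) hleω

/-- If `D` is measurable with respect to `⨆ n, ℱ n`, `L : [0,∞) → ℝ` is nonincreasing with
`0 < L ≤ 1`, `X n` (ℕ-valued) and `Y n` (nonnegative real-valued) are `ℱ n`-measurable with
`L(Y n) ^ (X n) ≤ P(D | ℱ n)` a.s., then `X n + Y n → ∞` almost surely on `Dᶜ`. -/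
theorem tendsto_atTop_of_laplace_pow_le_condexp
    {Ω : Type*} {m : MeasurableSpace Ω} {μ : Measure Ω} [IsProbabilityMeasure μ]
    (ℱ : Filtration ℕ m) (D : Set Ω) (hD : MeasurableSet[⨆ n, ℱ n] D)
    (L : ℝ → ℝ) (hL : AntitoneOn L (Set.Ici 0))
    (hL0 : ∀ t, 0 ≤ t → 0 < L t) (hL1 : ∀ t, 0 ≤ t → L t ≤ 1)
    (X : ℕ → Ω → ℕ) (hX : ∀ n, Measurable[ℱ n] (X n))
    (Y : ℕ → Ω → ℝ) (hY : ∀ n, Measurable[ℱ n] (Y n)) (hY0 : ∀ n ω, 0 ≤ Y n ω)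
    (hle : ∀ n, ∀ᵐ ω ∂μ,
      (L (Y n ω)) ^ (X n ω) ≤ (μ[D.indicator (fun _ => (1 : ℝ)) | ℱ n]) ω) :
    ∀ᵐ ω ∂μ, ω ∈ Dᶜ →
      Tendsto (fun n => (X n ω : ℝ) + Y n ω) atTop atTop :=
  tendsto_atTop_of_laplace_pow_le_condexp_general ℱ D hD L hL hL0 hL1 X Y hY0 hle
end

section
/- Let k be a positive integer and let S ⊆ [0,∞) be a Lebesgue-measurable set with Lebesgue measure at least 2k. Then there exist measurable sets D_1, …, D_k ⊆ S such that each D_i has Lebesgue measure exactly 1 and such that for all 1 ≤ i < j ≤ k, every x ∈ D_i and y ∈ D_j satisfy y − x ≥ 1 (in particular, the distance between any two of the sets is at least 1). -/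
/-! Greedy extraction. Since `S` is bounded below, `t ↦ volume (S ∩ Iic t)` is finite and
1-Lipschitz, so by the intermediate value theorem some `b` has `volume (S ∩ Iic b) = 1`. Take
`S ∩ Iic b` as the first block, sacrifice the gap `Ioc b (b + 1)` (of measure `1`), and recurse on
`S ∩ Ioi (b + 1)`: each block costs at most `2` of the measure of `S`. -/

open MeasureTheory Set Filter
open scoped ENNReal

namespace Real

variable {S : Set ℝ} {a : ℝ}

theorem volume_inter_Iic_ne_top_of_subset_Ioi (hSa : S ⊆ Ioi a) (t : ℝ) :
    volume (S ∩ Iic t) ≠ ∞ :=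
  ((measure_mono fun _ hx => ⟨hSa hx.1, hx.2⟩ : volume (S ∩ Iic t) ≤ volume (Ioc a t)).trans_lt
    measure_Ioc_lt_top).ne

theorem lipschitzWith_toReal_volume_inter_Iic (hSa : S ⊆ Ioi a) :
    LipschitzWith 1 fun t => (volume (S ∩ Iic t)).toReal := by
  refine LipschitzWith.of_le_add fun x y => ?_
  have hcover : S ∩ Iic x ⊆ (S ∩ Iic y) ∪ Ioc y x := fun z ⟨hzS, hzx⟩ =>
    (le_or_gt z y).imp (fun hzy => ⟨hzS, hzy⟩) fun hyz => ⟨hyz, hzx⟩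
  have hle : volume (S ∩ Iic x) ≤ volume (S ∩ Iic y) + ENNReal.ofReal (dist x y) :=
    calc volume (S ∩ Iic x) ≤ volume (S ∩ Iic y) + volume (Ioc y x) :=
          (measure_mono hcover).trans (measure_union_le _ _)
      _ ≤ volume (S ∩ Iic y) + ENNReal.ofReal (dist x y) := by
          rw [volume_Ioc, dist_eq]
          gcongr
          exact le_abs_self _
  simpa [dist_nonneg] using
    ENNReal.toReal_le_add hle (volume_inter_Iic_ne_top_of_subset_Ioi hSa y) ENNReal.ofReal_ne_top

theorem exists_volume_inter_Iic_eq (hSa : S ⊆ Ioi a) {c : ℝ≥0∞} (hc : c < volume S) :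
    ∃ b, volume (S ∩ Iic b) = c := by
  obtain ⟨T, hcT, haT⟩ : ∃ T, c < volume (S ∩ Iic T) ∧ a ≤ T := by
    have hlim := tendsto_measure_Iic_atTop (volume.restrict S)
    simp only [Measure.restrict_apply measurableSet_Iic, Measure.restrict_apply_univ,
      inter_comm (Iic _)] at hlim
    exact ((hlim.eventually (lt_mem_nhds hc)).and (eventually_ge_atTop a)).exists
  have hfin := volume_inter_Iic_ne_top_of_subset_Ioi hSa
  have hzero : volume (S ∩ Iic a) = 0 := by
    rw [← compl_Iic, subset_compl_iff_disjoint_right] at hSa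
    simp [hSa.inter_eq]
  obtain ⟨b, -, hb⟩ := intermediate_value_Icc haT
    (lipschitzWith_toReal_volume_inter_Iic hSa).continuous.continuousOn
    (show c.toReal ∈ Icc _ _ from ⟨by simp [hzero], ENNReal.toReal_mono (hfin T) hcT.le⟩)
  exact ⟨b, (ENNReal.toReal_eq_toReal_iff' (hfin b) hc.ne_top).1 hb⟩

theorem volume_le_inter_Iic_add_one_add_inter_Ioi (S : Set ℝ) (b : ℝ) :
    volume S ≤ volume (S ∩ Iic b) + 1 + volume (S ∩ Ioi (b + 1)) := by
  have hcover : S ⊆ (S ∩ Iic b) ∪ Ioc b (b + 1) ∪ (S ∩ Ioi (b + 1)) := by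
    intro x hx
    rcases le_or_gt x b with hxb | hbx
    · exact Or.inl (Or.inl ⟨hx, hxb⟩)
    rcases le_or_gt x (b + 1) with hxb | hbx'
    · exact Or.inl (Or.inr ⟨hbx, hxb⟩)
    · exact Or.inr ⟨hx, hbx'⟩
  calc volume S ≤ volume ((S ∩ Iic b) ∪ Ioc b (b + 1)) + volume (S ∩ Ioi (b + 1)) :=
        (measure_mono hcover).trans (measure_union_le _ _)
    _ ≤ volume (S ∩ Iic b) + volume (Ioc b (b + 1)) + volume (S ∩ Ioi (b + 1)) := by
        gcongr; exact measure_union_le _ _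
    _ = volume (S ∩ Iic b) + 1 + volume (S ∩ Ioi (b + 1)) := by simp [volume_Ioc]

end Real

def UnitSeparated {n : ℕ} (D : Fin n → Set ℝ) : Prop :=
  ∀ i j : Fin n, i < j → ∀ x ∈ D i, ∀ y ∈ D j, 1 ≤ y - x

theorem UnitSeparated.cons {n : ℕ} {D : Fin n → Set ℝ} (hD : UnitSeparated D) {D₀ : Set ℝ}
    (hD₀ : ∀ x ∈ D₀, ∀ i, ∀ y ∈ D i, 1 ≤ y - x) :
    UnitSeparated (Fin.cons D₀ D : Fin (n + 1) → Set ℝ) := by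
  intro i j hij
  induction j using Fin.cases with
  | zero => exact absurd hij (Fin.not_lt_zero i)
  | succ j =>
    induction i using Fin.cases with
    | zero => simpa using fun x hx => hD₀ x hx j
    | succ i => simpa using hD i j (Fin.succ_lt_succ_iff.1 hij)

open Real in
theorem exists_unitSeparated_unit_volume_subsets (n : ℕ) {S : Set ℝ} {a : ℝ}
    (hS : MeasurableSet S) (hSa : S ⊆ Ioi a) (hvol : 2 * n ≤ volume S) :
    ∃ D : Fin n → Set ℝ,
      (∀ i, D i ⊆ S ∧ MeasurableSet (D i) ∧ volume (D i) = 1) ∧ UnitSeparated D := by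
  induction n generalizing S a with
  | zero => exact ⟨Fin.elim0, fun i => i.elim0, fun i => i.elim0⟩
  | succ n ih =>
    obtain ⟨b, hb⟩ := exists_volume_inter_Iic_eq hSa (c := 1) <| by
      calc (1 : ℝ≥0∞) < 2 := ENNReal.one_lt_two
        _ ≤ 2 * (n + 1 : ℕ) := le_mul_of_one_le_right' (by exact_mod_cast n.succ_pos)
        _ ≤ volume S := hvol
    have hrest : 2 * n ≤ volume (S ∩ Ioi (b + 1)) := by
      have h := hvol.trans (volume_le_inter_Iic_add_one_add_inter_Ioi S b)
      rw [hb, one_add_one_eq_two, Nat.cast_succ, mul_add_one, add_comm _ (2 : ℝ≥0∞)] at h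
      exact (ENNReal.add_le_add_iff_left ENNReal.ofNat_ne_top).1 h
    obtain ⟨D, hDS, hD⟩ := ih (hS.inter measurableSet_Ioi) inter_subset_right hrest
    refine ⟨Fin.cons (S ∩ Iic b) D, Fin.forall_fin_succ.2 ⟨?_, fun i => ?_⟩, hD.cons ?_⟩
    · exact ⟨inter_subset_left, hS.inter measurableSet_Iic, hb⟩
    · simpa using ⟨(hDS i).1.trans inter_subset_left, (hDS i).2⟩
    · intro x hx i y hy
      linarith [mem_Iic.1 hx.2, mem_Ioi.1 ((hDS i).1 hy).2]

theorem exists_separated_unit_measure_subsets_general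
    (k : ℕ) (S : Set ℝ) (hS : MeasurableSet S) (hS0 : S ⊆ Set.Ici 0)
    (hvol : (2 * k : ℝ≥0∞) ≤ volume S) :
    ∃ D : Fin k → Set ℝ,
      (∀ i, D i ⊆ S ∧ MeasurableSet (D i) ∧ volume (D i) = 1) ∧
      (∀ i j : Fin k, i < j → ∀ x ∈ D i, ∀ y ∈ D j, 1 ≤ y - x) :=
  exists_unitSeparated_unit_volume_subsets k hS
    (hS0.trans (Ici_subset_Ioi.2 (neg_one_lt_zero (R := ℝ)))) hvol

/-- From a measurable set `S ⊆ [0,∞)` of Lebesgue measure at least `2k` one can extract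
`k` measurable subsets `D_1, …, D_k` of `S`, each of Lebesgue measure exactly `1`, which are
pairwise separated: for `i < j`, every `x ∈ D_i` and `y ∈ D_j` satisfy `y − x ≥ 1`. -/
theorem exists_separated_unit_measure_subsets
    (k : ℕ) (hk : 0 < k) (S : Set ℝ) (hS : MeasurableSet S) (hS0 : S ⊆ Set.Ici 0)
    (hvol : (2 * k : ℝ≥0∞) ≤ volume S) :
    ∃ D : Fin k → Set ℝ,
      (∀ i, D i ⊆ S ∧ MeasurableSet (D i) ∧ volume (D i) = 1) ∧
      (∀ i j : Fin k, i < j → ∀ x ∈ D i, ∀ y ∈ D j, 1 ≤ y - x) :=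
  exists_separated_unit_measure_subsets_general k S hS hS0 hvol
end
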